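/- arXiv:1610.03387 — 4 statements merged into one kernel-verified Lean document; each statement's English description precedes it below -/
import Mathlib

section
/- Let 0 < T ≤ ∞ and let f : [0,T] → ℂ be measurable with ∫_0^T |f(t)| e^{-ℓt} dt < ∞ for some ℓ ≥ 0. If f is right-continuous at 0 and f(0) ≠ 0, then F(λ) := ∫_0^T f(t) e^{-λt} dt satisfies F(λ) ~ f(0)/λ as λ → ∞, i.e. lim_{λ→∞} λ F(λ) = f(0). -/
/-!
Writing `λ e^{-λt} f(t) = (λ e^{-(λ-ℓ)t}) · (e^{-ℓt} f(t))`, the second factor is integrable on `S`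
and tends to `f 0` at `0`, while the kernels `λ e^{-(λ-ℓ)t}` form a family of peak functions at `0`:
they are nonnegative, tend to `0` uniformly on `[r, ∞)` for each `r > 0`, and have mass tending to
`1` on `[0, δ]`. Integrals against peak functions converge to the value at the peak.
-/

open MeasureTheory Filter Set Topology Real
open scoped ENNReal

theorem integral_Icc_exp_neg_mul {c : ℝ} (hc : c ≠ 0) {δ : ℝ} (hδ : 0 ≤ δ) :
    ∫ t in Icc 0 δ, exp (-(c * t)) = (1 - exp (-(c * δ))) / c := by
  rw [integral_Icc_eq_integral_Ioc, ← intervalIntegral.integral_of_le hδ,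
    intervalIntegral.integral_comp_mul_left (fun x => exp (-x)) hc,
    intervalIntegral.integral_comp_neg, integral_exp, mul_zero, neg_zero, exp_zero,
    smul_eq_mul, inv_mul_eq_div]

theorem tendsto_integral_Icc_mul_exp_neg_mul (ℓ : ℝ) {δ : ℝ} (hδ : 0 < δ) :
    Tendsto (fun c => ∫ t in Icc 0 δ, c * exp (-((c - ℓ) * t))) atTop (𝓝 1) := by
  have hexp : Tendsto (fun c => exp (-((c - ℓ) * δ))) atTop (𝓝 0) :=
    tendsto_exp_neg_atTop_nhds_zero.comp
      ((tendsto_atTop_add_const_right _ (-ℓ) tendsto_id).atTop_mul_const hδ)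
  have hratio : Tendsto (fun c : ℝ => 1 - ℓ / c) atTop (𝓝 1) := by
    simpa using tendsto_const_nhds.sub ((tendsto_const_nhds (x := ℓ)).div_atTop tendsto_id)
  have key := ((tendsto_const_nhds (x := (1 : ℝ))).sub hexp).div hratio one_ne_zero
  rw [sub_zero, div_one] at key
  refine key.congr' ?_
  filter_upwards [eventually_gt_atTop (max ℓ 0)] with c hc
  have hcℓ : c - ℓ ≠ 0 := by linarith [le_max_left ℓ 0]
  have hc0 : c ≠ 0 := by linarith [le_max_right ℓ 0]
  rw [integral_const_mul, integral_Icc_exp_neg_mul hcℓ hδ.le, Pi.div_apply, mul_comm (c - ℓ) δ]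
  field_simp

theorem tendstoUniformlyOn_mul_exp_neg_mul (ℓ : ℝ) {r : ℝ} (hr : 0 < r) :
    TendstoUniformlyOn (fun c t => c * exp (-((c - ℓ) * t))) 0 atTop (Ici r) := by
  have hdecay : Tendsto (fun c => c * exp (-((c - ℓ) * r))) atTop (𝓝 0) := by
    have := ((tendsto_pow_mul_exp_neg_atTop_nhds_zero 1).comp
      (tendsto_id.const_mul_atTop hr)).const_mul (exp (ℓ * r) / r)
    rw [mul_zero] at this
    refine this.congr fun c => ?_
    simp only [Function.comp_apply, id, pow_one]
    rw [show -((c - ℓ) * r) = ℓ * r + -(r * c) by ring, exp_add]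
    field_simp
  rw [Metric.tendstoUniformlyOn_iff]
  intro ε hε
  filter_upwards [hdecay.eventually_lt_const hε, eventually_ge_atTop (max ℓ 0)] with c hcε hc t ht
  have hcℓ : 0 ≤ c - ℓ := by linarith [le_max_left ℓ 0]
  have hc0 : 0 ≤ c := le_trans (le_max_right ℓ 0) hc
  rw [Pi.zero_apply, dist_zero_left, Real.norm_of_nonneg (by positivity)]
  calc c * exp (-((c - ℓ) * t)) ≤ c * exp (-((c - ℓ) * r)) := by
        gcongr; exact ht
    _ < ε := hcε

theorem tendsto_smul_setIntegral_exp_neg_mul_smul {E : Type*} [NormedAddCommGroup E]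
    [NormedSpace ℝ E] [CompleteSpace E] {S : Set ℝ} (hS : MeasurableSet S) (hS0 : S ⊆ Ici 0)
    {δ : ℝ} (hδ : 0 < δ) (hδS : Icc 0 δ ⊆ S) {ℓ : ℝ} {g : ℝ → E} {a : E}
    (hg : IntegrableOn (fun t => exp (-(ℓ * t)) • g t) S) (hga : Tendsto g (𝓝[S] 0) (𝓝 a)) :
    Tendsto (fun c : ℝ => c • ∫ t in S, exp (-(c * t)) • g t) atTop (𝓝 a) := by
  have hweight : Tendsto (fun t => exp (-(ℓ * t)) • g t) (𝓝[S] 0) (𝓝 a) := by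
    have : Tendsto (fun t => exp (-(ℓ * t))) (𝓝[S] 0) (𝓝 1) := by
      have hcont : Continuous fun t : ℝ => exp (-(ℓ * t)) := by fun_prop
      simpa using (hcont.tendsto 0).mono_left nhdsWithin_le_nhds
    simpa using this.smul hga
  have hnear : Icc 0 δ ∈ 𝓝[S] 0 :=
    mem_nhdsWithin.2 ⟨Ioo (-δ) δ, isOpen_Ioo, by simpa using hδ,
      fun t ⟨ht, htS⟩ => ⟨hS0 htS, ht.2.le⟩⟩
  have hnonneg : ∀ᶠ c in atTop, ∀ t ∈ S, 0 ≤ c * exp (-((c - ℓ) * t)) :=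
    (eventually_ge_atTop 0).mono fun c hc t _ => by positivity
  have hsmall : ∀ u : Set ℝ, IsOpen u → 0 ∈ u →
      TendstoUniformlyOn (fun c t => c * exp (-((c - ℓ) * t))) 0 atTop (S \ u) := by
    intro u hu h0u
    obtain ⟨r, hr, hru⟩ := Metric.isOpen_iff.1 hu 0 h0u
    refine (tendstoUniformlyOn_mul_exp_neg_mul ℓ hr).mono fun t ⟨htS, htu⟩ =>
      mem_Ici.2 <| le_of_not_gt fun htr => htu (hru ?_)
    rw [Real.ball_eq_Ioo]
    constructor <;> linarith [mem_Ici.1 (hS0 htS)]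
  have hpeak := tendsto_setIntegral_peak_smul_of_integrableOn_of_tendsto hS measurableSet_Icc
    hδS hnear (by simp) hnonneg hsmall (tendsto_integral_Icc_mul_exp_neg_mul ℓ hδ)
    (Eventually.of_forall fun c => by fun_prop) hg hweight
  refine hpeak.congr fun c => ?_
  rw [← integral_smul]
  refine setIntegral_congr_fun hS fun t _ => ?_
  simp only [smul_smul]
  rw [mul_assoc, ← exp_add]
  ring_nf

theorem laplace_leading_term_general (T : ℝ≥0∞) (hT : 0 < T) (f : ℝ → ℂ)
    (S : Set ℝ) (hS : S = {t : ℝ | 0 ≤ t ∧ ENNReal.ofReal t < T})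
    (hmeas : Measurable f) (ℓ : ℝ)
    (hint : IntegrableOn (fun t => ‖f t‖ * Real.exp (-ℓ * t)) S)
    (hcont : Tendsto f (nhdsWithin 0 (Set.Ici 0)) (nhds (f 0))) :
    Tendsto (fun lam : ℝ => (lam : ℂ) * ∫ t in S, f t * Complex.exp (-(lam * t)))
      atTop (nhds (f 0)) := by
  obtain ⟨δ, -, hδ, hδT⟩ := ENNReal.lt_iff_exists_real_btwn.1 hT
  have hS0 : S ⊆ Ici 0 := by rw [hS]; exact fun t ht => ht.1
  have hδS : Icc 0 δ ⊆ S := by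
    rw [hS]
    exact fun t ht => ⟨ht.1, (ENNReal.ofReal_le_ofReal ht.2).trans_lt hδT⟩
  have hSmeas : MeasurableSet S := by
    rw [hS]
    exact measurableSet_Ici.inter (ENNReal.measurable_ofReal measurableSet_Iio)
  have hweighted : IntegrableOn (fun t => exp (-(ℓ * t)) • f t) S := by
    refine (integrable_norm_iff (by fun_prop)).1 (hint.congr_fun (fun t _ => ?_) hSmeas)
    rw [norm_smul, Real.norm_of_nonneg (exp_nonneg _), mul_comm, ← neg_mul]
  refine (tendsto_smul_setIntegral_exp_neg_mul_smul hSmeas hS0 (ENNReal.ofReal_pos.1 hδ) hδS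
    hweighted (hcont.mono_left (nhdsWithin_mono 0 hS0))).congr fun c => ?_
  rw [Complex.real_smul]
  congr 1
  refine setIntegral_congr_fun hSmeas fun t _ => ?_
  simp only [Complex.real_smul, Complex.ofReal_exp]
  push_cast
  ring

/-- Let `0 < T ≤ ∞` and `f : [0,T] → ℂ` be measurable with
`∫_0^T ‖f t‖ e^{-ℓ t} dt < ∞` for some `ℓ ≥ 0`.  If `f` is right-continuous
at `0` and `f 0 ≠ 0`, then `F(λ) = ∫_0^T f t e^{-λ t} dt ∼ f 0 / λ` as
`λ → ∞`, i.e. `λ F(λ) → f 0`. -/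
theorem laplace_leading_term (T : ℝ≥0∞) (hT : 0 < T) (f : ℝ → ℂ)
    (S : Set ℝ) (hS : S = {t : ℝ | 0 ≤ t ∧ ENNReal.ofReal t < T})
    (hmeas : Measurable f) (ℓ : ℝ) (hℓ : 0 ≤ ℓ)
    (hint : IntegrableOn (fun t => ‖f t‖ * Real.exp (-ℓ * t)) S)
    (hcont : Tendsto f (nhdsWithin 0 (Set.Ici 0)) (nhds (f 0)))
    (hne : f 0 ≠ 0) :
    Tendsto (fun lam : ℝ => (lam : ℂ) * ∫ t in S, f t * Complex.exp (-(lam * t)))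
      atTop (nhds (f 0)) :=
  laplace_leading_term_general T hT f S hS hmeas ℓ hint hcont
end

section
/- (Watson's lemma, one-term version) Let 0 < T ≤ ∞ and f : [0,T] → ℂ be measurable with ∫_0^T |f(t)| e^{-ℓt} dt < ∞ for some ℓ ≥ 0. Suppose f(t) = a t^b + O(t^{b'}) as t → 0⁺, where -1 < b < b' are real and a ∈ ℂ, a ≠ 0. Then ∫_0^T f(t) e^{-λt} dt = a Γ(b+1) λ^{-b-1} + O(λ^{-b'-1}) as λ → ∞ with λ > 0. -/
/-! Choose `0 < δ₀ ≤ δ` with `(0, δ₀] ⊆ S` and compare `∫_S f e^{-λt}` with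
`∫_0^∞ a t^b e^{-λt} dt = a Γ(b+1) λ^{-b-1}`. On `(0, δ₀]` the difference of the integrands is
at most `M t^{b'} e^{-λt}`, whose integral is `M Γ(b'+1) λ^{-b'-1}`. Beyond `δ₀`, for `λ ≥ ℓ`,
`e^{-λt} ≤ e^{-(λ-ℓ)δ₀} e^{-ℓt}` makes the rest of `∫_S f e^{-λt}` exponentially small, and
`t^b ≤ δ₀^{b-b'} t^{b'}` makes the tail `∫_{δ₀}^∞ a t^b e^{-λt}` of the main term
`O(λ^{-b'-1})`. -/

open MeasureTheory Filter Real Set Asymptotics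
open scoped ENNReal

lemma integrableOn_rpow_mul_exp_neg_mul_Ioi {c r : ℝ} (hc : -1 < c) (hr : 0 < r) :
    IntegrableOn (fun t : ℝ => t ^ c * exp (-(r * t))) (Ioi 0) := by
  simpa using integrableOn_rpow_mul_exp_neg_mul_rpow hc one_pos hr

lemma integral_rpow_mul_exp_neg_mul_Ioi_eq_Gamma_mul_rpow {c r : ℝ} (hc : -1 < c) (hr : 0 < r) :
    ∫ t in Ioi 0, t ^ c * exp (-(r * t)) = Gamma (c + 1) * r ^ (-c - 1) := by
  have h := integral_rpow_mul_exp_neg_mul_Ioi (a := c + 1) (by linarith) hr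
  rw [add_sub_cancel_right] at h
  rw [h, one_div, inv_rpow hr.le, ← rpow_neg hr.le, neg_add', mul_comm]

lemma ofReal_cpow_mul_cexp_neg_mul {b r t : ℝ} (ht : 0 ≤ t) :
    (t : ℂ) ^ (b : ℂ) * Complex.exp (-(r * t)) = ((t ^ b * exp (-(r * t)) : ℝ) : ℂ) := by
  push_cast [Complex.ofReal_cpow ht]
  rfl

lemma norm_mul_cexp_neg_mul (z : ℂ) (r t : ℝ) :
    ‖z * Complex.exp (-(r * t))‖ = ‖z‖ * exp (-(r * t)) := by
  rw [norm_mul, Complex.norm_exp]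
  simp

lemma integrableOn_cpow_mul_cexp_neg_mul_Ioi (a : ℂ) {b r : ℝ} (hb : -1 < b) (hr : 0 < r) :
    IntegrableOn (fun t : ℝ => a * (t : ℂ) ^ (b : ℂ) * Complex.exp (-(r * t))) (Ioi 0) := by
  refine IntegrableOn.congr_fun ((integrableOn_rpow_mul_exp_neg_mul_Ioi hb hr).ofReal.const_mul a)
    (fun t ht => ?_) measurableSet_Ioi
  rw [mul_assoc, ofReal_cpow_mul_cexp_neg_mul (le_of_lt ht)]
  rfl

lemma integral_cpow_mul_cexp_neg_mul_Ioi_eq_Gamma_mul_cpow (a : ℂ) {b r : ℝ} (hb : -1 < b)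
    (hr : 0 < r) :
    ∫ t : ℝ in Ioi 0, a * (t : ℂ) ^ (b : ℂ) * Complex.exp (-(r * t)) =
      a * Gamma (b + 1) * (r : ℂ) ^ ((-b - 1 : ℝ) : ℂ) := by
  rw [setIntegral_congr_fun measurableSet_Ioi
      (g := fun t : ℝ => a * ((t ^ b * exp (-(r * t)) : ℝ) : ℂ))
      (fun t ht => by simp only [mul_assoc, ofReal_cpow_mul_cexp_neg_mul (le_of_lt ht)]),
    integral_const_mul, integral_complex_ofReal,
    integral_rpow_mul_exp_neg_mul_Ioi_eq_Gamma_mul_rpow hb hr, ← Complex.ofReal_cpow hr.le]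
  push_cast
  ring

lemma exists_Ioc_subset_setOf_ofReal_lt {T : ℝ≥0∞} (hT : 0 < T) {δ : ℝ} (hδ : 0 < δ) :
    ∃ δ₀, 0 < δ₀ ∧ δ₀ ≤ δ ∧ Ioc 0 δ₀ ⊆ {t : ℝ | 0 < t ∧ ENNReal.ofReal t < T} := by
  have hnear : ∀ᶠ t in nhds (0 : ℝ), t ≤ δ ∧ ENNReal.ofReal t < T :=
    (eventually_le_nhds hδ).and <| (ENNReal.tendsto_ofReal tendsto_id).eventually
      (eventually_lt_nhds (by simpa using hT))
  obtain ⟨δ₀, ⟨hδ₀δ, hδ₀T⟩, hδ₀⟩ :=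
    ((hnear.filter_mono nhdsWithin_le_nhds).and (self_mem_nhdsWithin (s := Ioi (0 : ℝ)))).exists
  exact ⟨δ₀, hδ₀, hδ₀δ, fun t ht => ⟨ht.1, (ENNReal.ofReal_le_ofReal ht.2).trans_lt hδ₀T⟩⟩

lemma setIntegral_sub_setIntegral_eq_of_subset {α E : Type*} [MeasurableSpace α]
    [NormedAddCommGroup E] [NormedSpace ℝ E] {μ : Measure α} {g P : α → E} {I S U : Set α}
    (hI : MeasurableSet I) (hIS : I ⊆ S) (hIU : I ⊆ U) (hg : IntegrableOn g S μ)
    (hP : IntegrableOn P U μ) :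
    ∫ x in S, g x ∂μ - ∫ x in U, P x ∂μ =
      ∫ x in I, (g x - P x) ∂μ + ∫ x in S \ I, g x ∂μ - ∫ x in U \ I, P x ∂μ := by
  rw [← integral_inter_add_sdiff hI hg, ← integral_inter_add_sdiff hI hP, inter_eq_right.2 hIS,
    inter_eq_right.2 hIU, integral_sub (hg.mono_set hIS) (hP.mono_set hIU)]
  abel

lemma isBigO_setIntegral_of_norm_le_rpow_mul_exp {E : Type*} [NormedAddCommGroup E]
    [NormedSpace ℝ E] {h : ℝ → ℝ → E} {s : Set ℝ} (hs : MeasurableSet s) (hs0 : s ⊆ Ioi 0)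
    {C c : ℝ} (hC : 0 ≤ C) (hc : -1 < c)
    (hh : ∀ r, ∀ t ∈ s, ‖h r t‖ ≤ C * (t ^ c * exp (-(r * t)))) :
    (fun r => ∫ t in s, h r t) =O[atTop] fun r => r ^ (-c - 1) := by
  refine IsBigO.of_bound (C * Gamma (c + 1)) ?_
  filter_upwards [eventually_gt_atTop 0] with r hr
  have hint : IntegrableOn _ (Ioi (0 : ℝ)) :=
    (integrableOn_rpow_mul_exp_neg_mul_Ioi hc hr).const_mul C
  rw [norm_of_nonneg (rpow_nonneg hr.le _)]
  calc ‖∫ t in s, h r t‖ ≤ ∫ t in s, C * (t ^ c * exp (-(r * t))) :=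
        norm_integral_le_of_norm_le (hint.mono_set hs0) (ae_restrict_of_forall_mem hs (hh r))
    _ ≤ ∫ t in Ioi 0, C * (t ^ c * exp (-(r * t))) :=
        setIntegral_mono_set hint (ae_restrict_of_forall_mem measurableSet_Ioi fun t ht =>
          mul_nonneg hC (mul_nonneg (rpow_nonneg (le_of_lt ht) _) (exp_pos _).le))
          hs0.eventuallyLE
    _ = C * Gamma (c + 1) * r ^ (-c - 1) := by
      rw [integral_const_mul, integral_rpow_mul_exp_neg_mul_Ioi_eq_Gamma_mul_rpow hc hr, mul_assoc]

lemma integrableOn_mul_cexp_neg_mul {f : ℝ → ℂ} {s : Set ℝ} (hs : MeasurableSet s)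
    (hs0 : s ⊆ Ioi 0) (hf : AEStronglyMeasurable f (volume.restrict s)) {ℓ r : ℝ}
    (hint : IntegrableOn (fun t => ‖f t‖ * exp (-ℓ * t)) s) (hℓr : ℓ ≤ r) :
    IntegrableOn (fun t => f t * Complex.exp (-(r * t))) s := by
  refine hint.mono' (hf.mul (by fun_prop)) (ae_restrict_of_forall_mem hs fun t ht => ?_)
  rw [norm_mul_cexp_neg_mul]
  have ht : 0 < t := hs0 ht
  gcongr
  nlinarith

lemma isLittleO_setIntegral_mul_cexp_neg_mul {f : ℝ → ℂ} {s : Set ℝ} (hs : MeasurableSet s)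
    {δ ℓ : ℝ} (hδ : 0 < δ) (hsδ : ∀ t ∈ s, δ ≤ t)
    (hint : IntegrableOn (fun t => ‖f t‖ * exp (-ℓ * t)) s) (c : ℝ) :
    (fun r : ℝ => ∫ t in s, f t * Complex.exp (-(r * t))) =o[atTop] fun r => r ^ c := by
  set K := ∫ t in s, ‖f t‖ * exp (-ℓ * t)
  refine IsBigO.trans_isLittleO ?_ (isLittleO_exp_neg_mul_rpow_atTop hδ c)
  refine IsBigO.of_bound (exp (ℓ * δ) * K) ?_
  filter_upwards [eventually_ge_atTop ℓ] with r hℓr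
  have hpoint : ∀ t ∈ s, ‖f t * Complex.exp (-(r * t))‖ ≤
      exp (ℓ * δ) * exp (-δ * r) * (‖f t‖ * exp (-ℓ * t)) := fun t ht => by
    rw [norm_mul_cexp_neg_mul, ← exp_add, mul_left_comm, ← exp_add]
    gcongr
    nlinarith [hsδ t ht]
  calc ‖∫ t in s, f t * Complex.exp (-(r * t))‖
      ≤ ∫ t in s, exp (ℓ * δ) * exp (-δ * r) * (‖f t‖ * exp (-ℓ * t)) :=
        norm_integral_le_of_norm_le (hint.const_mul _) (ae_restrict_of_forall_mem hs hpoint)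
    _ = exp (ℓ * δ) * K * ‖exp (-δ * r)‖ := by
      rw [integral_const_mul, norm_of_nonneg (exp_pos _).le]
      ring

lemma rpow_le_rpow_sub_mul_rpow {δ t b b' : ℝ} (hδ : 0 < δ) (hδt : δ ≤ t) (hbb' : b ≤ b') :
    t ^ b ≤ δ ^ (b - b') * t ^ b' := by
  have ht : 0 < t := hδ.trans_le hδt
  calc t ^ b = t ^ (b - b') * t ^ b' := by rw [← rpow_add ht, sub_add_cancel]
    _ ≤ δ ^ (b - b') * t ^ b' :=
      mul_le_mul_of_nonneg_right (rpow_le_rpow_of_nonpos hδ hδt (by linarith))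
        (rpow_nonneg ht.le _)

lemma norm_cpow_mul_cexp_neg_mul_le (a : ℂ) {δ b b' r t : ℝ} (hδ : 0 < δ) (hδt : δ ≤ t)
    (hbb' : b ≤ b') :
    ‖a * (t : ℂ) ^ (b : ℂ) * Complex.exp (-(r * t))‖ ≤
      ‖a‖ * δ ^ (b - b') * (t ^ b' * exp (-(r * t))) := by
  have ht : 0 ≤ t := hδ.le.trans hδt
  rw [norm_mul_cexp_neg_mul, norm_mul, ← Complex.ofReal_cpow ht, Complex.norm_real,
    norm_of_nonneg (rpow_nonneg ht _), mul_assoc, mul_assoc, ← mul_assoc (δ ^ _)]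
  gcongr
  exact rpow_le_rpow_sub_mul_rpow hδ hδt hbb'

lemma measurableSet_setOf_pos_and_ofReal_lt (T : ℝ≥0∞) :
    MeasurableSet {t : ℝ | 0 < t ∧ ENNReal.ofReal t < T} :=
  (measurableSet_lt measurable_const measurable_id).inter
    (measurableSet_lt ENNReal.measurable_ofReal measurable_const)

lemma Asymptotics.IsBigO.exists_forall_ge_norm_le_rpow {E : Type*} [Norm E] {F : ℝ → E} {c : ℝ}
    (h : F =O[atTop] fun x => x ^ c) :
    ∃ C Λ : ℝ, 0 < Λ ∧ ∀ x, Λ ≤ x → ‖F x‖ ≤ C * x ^ c := by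
  obtain ⟨C, hC⟩ := h.bound
  obtain ⟨Λ, hΛ⟩ := eventually_atTop.1 (hC.and (eventually_gt_atTop 0))
  refine ⟨C, max Λ 1, by positivity, fun x hx => ?_⟩
  obtain ⟨hbound, hx⟩ := hΛ x (le_of_max_le_left hx)
  rwa [norm_of_nonneg (rpow_nonneg hx.le _)] at hbound

theorem watson_lemma_one_term_general (T : ℝ≥0∞) (hT : 0 < T) (f : ℝ → ℂ)
    (S : Set ℝ) (hS : S = {t : ℝ | 0 < t ∧ ENNReal.ofReal t < T})
    (hmeas : Measurable f) (ℓ : ℝ)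
    (hint : IntegrableOn (fun t => ‖f t‖ * Real.exp (-ℓ * t)) S)
    (a : ℂ) (b b' : ℝ) (hb : -1 < b) (hbb' : b < b')
    (happrox : ∃ M δ : ℝ, 0 < M ∧ 0 < δ ∧ ∀ t : ℝ, 0 < t → t ≤ δ →
      ‖f t - a * (t : ℂ) ^ (b : ℂ)‖ ≤ M * t ^ b') :
    ∃ C Λ : ℝ, 0 < Λ ∧ ∀ lam : ℝ, Λ ≤ lam →
      ‖(∫ t in S, f t * Complex.exp (-(lam * t))) -
          a * Real.Gamma (b + 1) * (lam : ℂ) ^ ((-b - 1 : ℝ) : ℂ)‖ ≤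
        C * lam ^ (-b' - 1) := by
  obtain ⟨M, δ, hM, hδ, happ⟩ := happrox
  obtain ⟨δ₀, hδ₀, hδ₀δ, hIS⟩ := exists_Ioc_subset_setOf_ofReal_lt hT hδ
  rw [← hS] at hIS
  have hSmeas : MeasurableSet S := hS ▸ measurableSet_setOf_pos_and_ofReal_lt T
  have hS0 : S ⊆ Ioi 0 := hS ▸ fun t ht => ht.1
  have hb' : -1 < b' := hb.trans hbb'
  have hnear := isBigO_setIntegral_of_norm_le_rpow_mul_exp
    (h := fun r t =>
      f t * Complex.exp (-(r * t)) - a * (t : ℂ) ^ (b : ℂ) * Complex.exp (-(r * t)))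
    measurableSet_Ioc Ioc_subset_Ioi_self hM.le hb' fun r t ht => by
      rw [← sub_mul, norm_mul_cexp_neg_mul, ← mul_assoc]
      exact mul_le_mul_of_nonneg_right (happ t ht.1 (ht.2.trans hδ₀δ)) (exp_pos _).le
  have hfar := isLittleO_setIntegral_mul_cexp_neg_mul (hSmeas.diff measurableSet_Ioc) hδ₀
    (fun t ht => not_lt.1 fun h => ht.2 ⟨hS0 ht.1, h.le⟩) (hint.mono_set sdiff_subset) (-b' - 1)
  have htail := isBigO_setIntegral_of_norm_le_rpow_mul_exp
    (h := fun r t => a * (t : ℂ) ^ (b : ℂ) * Complex.exp (-(r * t)))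
    (measurableSet_Ioi.diff measurableSet_Ioc) sdiff_subset (by positivity) hb' fun r t ht =>
      norm_cpow_mul_cexp_neg_mul_le a hδ₀ (not_lt.1 fun h => ht.2 ⟨ht.1, h.le⟩) hbb'.le
  have hmain : (fun lam : ℝ => (∫ t in S, f t * Complex.exp (-(lam * t))) -
      a * Gamma (b + 1) * (lam : ℂ) ^ ((-b - 1 : ℝ) : ℂ)) =O[atTop]
        fun lam => lam ^ (-b' - 1) := by
    refine ((hnear.add hfar.isBigO).sub htail).congr' ?_ EventuallyEq.rfl
    filter_upwards [eventually_ge_atTop ℓ, eventually_gt_atTop 0] with lam hℓlam hlam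
    rw [← integral_cpow_mul_cexp_neg_mul_Ioi_eq_Gamma_mul_cpow a hb hlam,
      setIntegral_sub_setIntegral_eq_of_subset measurableSet_Ioc hIS Ioc_subset_Ioi_self
        (integrableOn_mul_cexp_neg_mul hSmeas hS0 hmeas.aestronglyMeasurable hint hℓlam)
        (integrableOn_cpow_mul_cexp_neg_mul_Ioi a hb hlam)]
  exact hmain.exists_forall_ge_norm_le_rpow

/-- Watson's lemma, one-term version.  Let `0 < T ≤ ∞` and `f : [0,T] → ℂ`
measurable with `∫_0^T ‖f t‖ e^{-ℓ t} dt < ∞` for some `ℓ ≥ 0`.  Suppose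
`f t = a t^b + O(t^{b'})` as `t → 0⁺` with `-1 < b < b'` and `a ≠ 0`.  Then
`∫_0^T f t e^{-λ t} dt = a Γ(b+1) λ^{-b-1} + O(λ^{-b'-1})` as `λ → +∞`. -/
theorem watson_lemma_one_term (T : ℝ≥0∞) (hT : 0 < T) (f : ℝ → ℂ)
    (S : Set ℝ) (hS : S = {t : ℝ | 0 < t ∧ ENNReal.ofReal t < T})
    (hmeas : Measurable f) (ℓ : ℝ) (hℓ : 0 ≤ ℓ)
    (hint : IntegrableOn (fun t => ‖f t‖ * Real.exp (-ℓ * t)) S)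
    (a : ℂ) (ha : a ≠ 0) (b b' : ℝ) (hb : -1 < b) (hbb' : b < b')
    (happrox : ∃ M δ : ℝ, 0 < M ∧ 0 < δ ∧ ∀ t : ℝ, 0 < t → t ≤ δ →
      ‖f t - a * (t : ℂ) ^ (b : ℂ)‖ ≤ M * t ^ b') :
    ∃ C Λ : ℝ, 0 < Λ ∧ ∀ lam : ℝ, Λ ≤ lam →
      ‖(∫ t in S, f t * Complex.exp (-(lam * t))) -
          a * Real.Gamma (b + 1) * (lam : ℂ) ^ ((-b - 1 : ℝ) : ℂ)‖ ≤
        C * lam ^ (-b' - 1) :=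
  watson_lemma_one_term_general T hT f S hS hmeas ℓ hint a b b' hb hbb' happrox
end

section
/- (Laplace's method, boundary maximum) Fix -∞ < a < b ≤ ∞ and let f : [a,b] → ℝ and g : [a,b] → ℝ be measurable with ∫_a^b |f(t)| e^{ℓ g(t)} dt < ∞ for some ℓ ≥ 0. Suppose g is differentiable at a with g'(a) < 0; suppose for every δ > 0 there exists η(δ) > 0 with g(t) < g(a) - η(δ) for all t ∈ (a+δ, b); and suppose f(t) ~ (t-a)^p as t → a⁺ with p > -1. Then ∫_a^b f(t) e^{λ g(t)} dt ~ Γ(p+1) (-g'(a) λ)^{-(p+1)} e^{g(a)λ} as λ → +∞. -/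
/-!
After normalising by `e^{λ g(a)}`, split the integral at `a + δ`. On `(a, a + δ]` the
substitution `t = a + s / λ` turns `λ^{p+1} ∫ f e^{λ (g - g a)}` into the integral over
`(0, λδ]` of `λ^p f(a + s/λ) e^{λ (g(a + s/λ) - g a)}`, which tends pointwise to
`s^p e^{g'(a) s}` and, for `δ` small, is dominated by `2 s^p e^{g'(a) s / 2}`; dominated
convergence gives `Γ(p+1) (-g'(a))^{-(p+1)}`. Beyond `a + δ` we have `g ≤ g a - η`, and writing
`e^{λ g} = e^{ℓ g} e^{(λ - ℓ) g}` bounds the tail by a constant times `e^{-ηλ}`, which beats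
every power of `λ`.
-/

open MeasureTheory Filter Set Real Topology

lemma exp_mul_sub_le_of_le_sub {ℓ lam x G η : ℝ} (hx : x ≤ G - η) (hlam : ℓ ≤ lam) :
    exp (lam * (x - G)) ≤ exp (ℓ * x) * exp (-ℓ * (G - η)) * exp (-η * lam) := by
  rw [← exp_add, ← exp_add, exp_le_exp]
  nlinarith

section ExpWeight

variable {α : Type*} [MeasurableSpace α] {μ : Measure α} {f g : α → ℝ} {ℓ lam G η : ℝ}

lemma integrable_mul_exp_mul_sub (hint : Integrable (fun t => |f t| * exp (ℓ * g t)) μ)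
    (hf : AEMeasurable f μ) (hgm : AEMeasurable g μ)
    (hg : ∀ᵐ t ∂μ, g t ≤ G) (hlam : ℓ ≤ lam) :
    Integrable (fun t => f t * exp (lam * (g t - G))) μ := by
  refine (hint.mul_const (exp (-ℓ * G))).mono'
    (hf.mul ((hgm.sub_const G).const_mul lam).exp).aestronglyMeasurable ?_
  filter_upwards [hg] with t ht
  have := exp_mul_sub_le_of_le_sub (x := g t) (G := G) (η := 0) (by rwa [sub_zero]) hlam
  rw [sub_zero, neg_zero, zero_mul, exp_zero, mul_one] at this
  rw [norm_mul, norm_of_nonneg (exp_pos _).le, mul_assoc, norm_eq_abs]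
  exact mul_le_mul_of_nonneg_left this (abs_nonneg _)

lemma norm_integral_mul_exp_mul_sub_le (hint : Integrable (fun t => |f t| * exp (ℓ * g t)) μ)
    (hg : ∀ᵐ t ∂μ, g t ≤ G - η) (hlam : ℓ ≤ lam) :
    ‖∫ t, f t * exp (lam * (g t - G)) ∂μ‖ ≤
      (∫ t, |f t| * exp (ℓ * g t) ∂μ) * exp (-ℓ * (G - η)) * exp (-η * lam) := by
  rw [← integral_mul_const, ← integral_mul_const]
  refine norm_integral_le_of_norm_le ((hint.mul_const _).mul_const _) ?_
  filter_upwards [hg] with t ht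
  rw [norm_mul, norm_of_nonneg (exp_pos _).le, norm_eq_abs, mul_assoc, mul_assoc]
  exact mul_le_mul_of_nonneg_left
    ((exp_mul_sub_le_of_le_sub ht hlam).trans_eq (mul_assoc _ _ _)) (abs_nonneg _)

lemma tendsto_rpow_mul_integral_mul_exp_of_le_sub (q : ℝ)
    (hint : Integrable (fun t => |f t| * exp (ℓ * g t)) μ) (hη : 0 < η)
    (hg : ∀ᵐ t ∂μ, g t ≤ G - η) :
    Tendsto (fun lam => lam ^ q * ∫ t, f t * exp (lam * (g t - G)) ∂μ) atTop (𝓝 0) := by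
  set M := (∫ t, |f t| * exp (ℓ * g t) ∂μ) * exp (-ℓ * (G - η))
  have hdecay : Tendsto (fun lam => M * (lam ^ q * exp (-η * lam))) atTop (𝓝 0) := by
    simpa using (tendsto_rpow_mul_exp_neg_mul_atTop_nhds_zero q η hη).const_mul M
  refine squeeze_zero_norm' ?_ hdecay
  filter_upwards [eventually_ge_atTop ℓ, eventually_ge_atTop 0] with lam hℓ h0
  rw [norm_mul, norm_of_nonneg (rpow_nonneg h0 q)]
  calc lam ^ q * ‖∫ t, f t * exp (lam * (g t - G)) ∂μ‖ ≤ lam ^ q * (M * exp (-η * lam)) :=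
        mul_le_mul_of_nonneg_left (norm_integral_mul_exp_mul_sub_le hint hg hℓ)
          (rpow_nonneg h0 q)
    _ = M * (lam ^ q * exp (-η * lam)) := by ring

lemma integral_mul_exp_mul_eq_exp_mul_integral :
    ∫ t, f t * exp (lam * g t) ∂μ = exp (G * lam) * ∫ t, f t * exp (lam * (g t - G)) ∂μ := by
  rw [← integral_const_mul]
  congr 1 with t
  rw [mul_left_comm, ← exp_add]
  ring_nf

lemma tendsto_integral_mul_exp_div_of_tendsto_rpow_mul {p c : ℝ} (hp : -1 < p) (hc : 0 < c)
    (h : Tendsto (fun lam => lam ^ (p + 1) * ∫ t, f t * exp (lam * (g t - G)) ∂μ) atTop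
      (𝓝 (Gamma (p + 1) * c ^ (-(p + 1))))) :
    Tendsto (fun lam => (∫ t, f t * exp (lam * g t) ∂μ) /
      (Gamma (p + 1) * (c * lam) ^ (-(p + 1)) * exp (G * lam))) atTop (𝓝 1) := by
  have hΓ : Gamma (p + 1) * c ^ (-(p + 1)) ≠ 0 :=
    (mul_pos (Gamma_pos_of_pos (by linarith)) (rpow_pos_of_pos hc _)).ne'
  have hratio := h.div_const (Gamma (p + 1) * c ^ (-(p + 1)))
  rw [div_self hΓ] at hratio
  refine hratio.congr' ?_
  filter_upwards [eventually_gt_atTop 0] with lam hlam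
  rw [integral_mul_exp_mul_eq_exp_mul_integral (g := g) (G := G), mul_rpow hc.le hlam.le, rpow_neg hlam.le]
  field_simp

end ExpWeight

lemma eventually_sub_le_mul_of_tendsto_slope {g : ℝ → ℝ} {a g' m : ℝ}
    (hslope : Tendsto (slope g a) (𝓝[>] a) (𝓝 g')) (hm : g' < m) :
    ∀ᶠ t in 𝓝[>] a, g t - g a ≤ m * (t - a) := by
  filter_upwards [hslope.eventually_lt_const hm, self_mem_nhdsWithin] with t hlt (ht : a < t)
  rw [slope_def_field, div_lt_iff₀ (sub_pos.mpr ht)] at hlt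
  exact hlt.le

lemma eventually_abs_le_mul_rpow_of_tendsto_div_rpow {f : ℝ → ℝ} {a p K : ℝ}
    (hfp : Tendsto (fun t => f t / (t - a) ^ p) (𝓝[>] a) (𝓝 1)) (hK : 1 < K) :
    ∀ᶠ t in 𝓝[>] a, |f t| ≤ K * (t - a) ^ p := by
  filter_upwards [hfp.abs.eventually_lt_const (by rwa [abs_one]), self_mem_nhdsWithin]
    with t hlt (ht : a < t)
  have hpos := rpow_pos_of_pos (sub_pos.mpr ht) p
  rw [abs_div, abs_of_pos hpos, div_lt_iff₀ hpos] at hlt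
  exact hlt.le

lemma exists_pos_forall_Ioc_add_of_eventually_nhdsGT {a : ℝ} {P : ℝ → Prop}
    (h : ∀ᶠ t in 𝓝[>] a, P t) : ∃ δ > 0, ∀ t ∈ Ioc a (a + δ), P t := by
  obtain ⟨u, hau, hu⟩ := mem_nhdsGT_iff_exists_Ioc_subset.mp h
  exact ⟨u - a, sub_pos.mpr hau, by rwa [add_sub_cancel]⟩

lemma setIntegral_Ioc_eq_inv_mul_setIntegral_comp_add_div (h : ℝ → ℝ) (a : ℝ) {δ lam : ℝ}
    (hδ : 0 ≤ δ) (hlam : 0 < lam) :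
    ∫ t in Ioc a (a + δ), h t = lam⁻¹ * ∫ s in Ioc 0 (lam * δ), h (a + s / lam) := by
  rw [← intervalIntegral.integral_of_le (by linarith),
    ← intervalIntegral.integral_of_le (by positivity)]
  simp [add_comm a, hlam.ne']

lemma integral_rpow_mul_exp_neg_mul_Ioi_eq_Gamma_mul {p c : ℝ} (hp : -1 < p) (hc : 0 < c) :
    ∫ s in Ioi 0, s ^ p * exp (-(c * s)) = Gamma (p + 1) * c ^ (-(p + 1)) := by
  have h := integral_rpow_mul_exp_neg_mul_Ioi (a := p + 1) (by linarith) hc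
  rw [add_sub_cancel_right] at h
  rw [h, mul_comm, one_div, inv_rpow hc.le, rpow_neg hc.le]

lemma tendsto_add_div_atTop_nhdsGT (a : ℝ) {s : ℝ} (hs : 0 < s) :
    Tendsto (fun lam : ℝ => a + s / lam) atTop (𝓝[>] a) := by
  refine tendsto_nhdsWithin_iff.mpr ⟨?_, ?_⟩
  · simpa using
      (tendsto_const_nhds (x := a)).add ((tendsto_const_nhds (x := s)).div_atTop tendsto_id)
  · filter_upwards [eventually_gt_atTop 0] with lam hlam
    exact lt_add_of_pos_right a (div_pos hs hlam)

section Rescaling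

variable {f g : ℝ → ℝ} {a p s : ℝ}

lemma tendsto_rpow_mul_comp_add_div
    (hfp : Tendsto (fun t => f t / (t - a) ^ p) (𝓝[>] a) (𝓝 1)) (hs : 0 < s) :
    Tendsto (fun lam : ℝ => lam ^ p * f (a + s / lam)) atTop (𝓝 (s ^ p)) := by
  have h := (hfp.comp (tendsto_add_div_atTop_nhdsGT a hs)).const_mul (s ^ p)
  rw [mul_one] at h
  refine h.congr' ?_
  filter_upwards [eventually_gt_atTop 0] with lam hlam
  have : (0 : ℝ) < lam ^ p := rpow_pos_of_pos hlam p
  simp only [Function.comp_apply, add_sub_cancel_left, div_rpow hs.le hlam.le]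
  field_simp

lemma tendsto_mul_sub_comp_add_div {g' : ℝ} (hslope : Tendsto (slope g a) (𝓝[>] a) (𝓝 g'))
    (hs : 0 < s) :
    Tendsto (fun lam : ℝ => lam * (g (a + s / lam) - g a)) atTop (𝓝 (s * g')) := by
  refine ((hslope.comp (tendsto_add_div_atTop_nhdsGT a hs)).const_mul s).congr' ?_
  filter_upwards [eventually_gt_atTop 0] with lam hlam
  simp only [Function.comp_apply, slope_def_field, add_sub_cancel_left]
  field_simp

/-- The integrand of `lam ^ (p + 1) * ∫ t in Ioc a (a + δ), f t * exp (lam * (g t - g a))`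
after the substitution `t = a + s / lam`. -/
noncomputable def laplaceRescaled (f g : ℝ → ℝ) (a p lam s : ℝ) : ℝ :=
  lam ^ p * (f (a + s / lam) * exp (lam * (g (a + s / lam) - g a)))

variable {c δ κ K lam : ℝ}

lemma tendsto_laplaceRescaled (hfp : Tendsto (fun t => f t / (t - a) ^ p) (𝓝[>] a) (𝓝 1))
    (hslope : Tendsto (slope g a) (𝓝[>] a) (𝓝 (-c))) (hs : 0 < s) :
    Tendsto (fun lam => laplaceRescaled f g a p lam s) atTop (𝓝 (s ^ p * exp (-(c * s)))) := by
  have hexp := (continuous_exp.tendsto _).comp (tendsto_mul_sub_comp_add_div hslope hs)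
  rw [mul_neg, mul_comm s c] at hexp
  simpa only [laplaceRescaled, mul_assoc, Function.comp_def] using
    (tendsto_rpow_mul_comp_add_div hfp hs).mul hexp

lemma abs_laplaceRescaled_le (hg_le : ∀ t ∈ Ioc a (a + δ), g t - g a ≤ -κ * (t - a))
    (hf_le : ∀ t ∈ Ioc a (a + δ), |f t| ≤ K * (t - a) ^ p) (hlam : 0 < lam)
    (hs : s ∈ Ioc 0 (lam * δ)) :
    |laplaceRescaled f g a p lam s| ≤ K * (s ^ p * exp (-κ * s)) := by
  have hu : 0 < s / lam := div_pos hs.1 hlam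
  have ht : a + s / lam ∈ Ioc a (a + δ) :=
    ⟨lt_add_of_pos_right a hu, add_le_add_right ((div_le_iff₀' hlam).mpr hs.2) a⟩
  have hft := hf_le _ ht
  have hgt := hg_le _ ht
  rw [add_sub_cancel_left] at hft hgt
  have hexp : exp (lam * (g (a + s / lam) - g a)) ≤ exp (-κ * s) := by
    rw [exp_le_exp]
    calc lam * (g (a + s / lam) - g a) ≤ lam * (-κ * (s / lam)) :=
          mul_le_mul_of_nonneg_left hgt hlam.le
      _ = -κ * s := by field_simp
  have hK : 0 ≤ K := nonneg_of_mul_nonneg_left ((abs_nonneg _).trans hft) (rpow_pos_of_pos hu p)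
  calc |laplaceRescaled f g a p lam s|
      = lam ^ p * (|f (a + s / lam)| * exp (lam * (g (a + s / lam) - g a))) := by
        rw [laplaceRescaled, abs_mul, abs_mul, abs_of_pos (rpow_pos_of_pos hlam p),
          abs_of_pos (exp_pos _)]
    _ ≤ lam ^ p * (K * (s / lam) ^ p * exp (-κ * s)) := by gcongr
    _ = K * (s ^ p * exp (-κ * s)) := by
        rw [div_rpow hs.1.le hlam.le]
        have : (0 : ℝ) < lam ^ p := rpow_pos_of_pos hlam p
        field_simp

lemma tendsto_setIntegral_laplaceRescaled (hf : Measurable f) (hg : Measurable g) (hp : -1 < p)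
    (hδ : 0 < δ) (hκ : 0 < κ) (hfp : Tendsto (fun t => f t / (t - a) ^ p) (𝓝[>] a) (𝓝 1))
    (hslope : Tendsto (slope g a) (𝓝[>] a) (𝓝 (-c)))
    (hg_le : ∀ t ∈ Ioc a (a + δ), g t - g a ≤ -κ * (t - a))
    (hf_le : ∀ t ∈ Ioc a (a + δ), |f t| ≤ K * (t - a) ^ p) :
    Tendsto (fun lam => ∫ s in Ioc 0 (lam * δ), laplaceRescaled f g a p lam s) atTop
      (𝓝 (∫ s in Ioi 0, s ^ p * exp (-(c * s)))) := by
  have hK : 0 ≤ K := nonneg_of_mul_nonneg_left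
    ((abs_nonneg _).trans (hf_le (a + δ) ⟨lt_add_of_pos_right a hδ, le_rfl⟩))
    (by simpa using rpow_pos_of_pos hδ p)
  simp only [← integral_indicator measurableSet_Ioc, ← integral_indicator measurableSet_Ioi]
  refine tendsto_integral_filter_of_dominated_convergence
    ((Ioi 0).indicator fun s => K * (s ^ p * exp (-κ * s))) ?_ ?_ ?_ ?_
  · refine Eventually.of_forall fun lam =>
      (Measurable.indicator ?_ measurableSet_Ioc).aestronglyMeasurable
    unfold laplaceRescaled
    fun_prop
  · filter_upwards [eventually_gt_atTop 0] with lam hlam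
    refine Eventually.of_forall fun s => ?_
    by_cases hs : s ∈ Ioc 0 (lam * δ)
    · rw [indicator_of_mem hs, indicator_of_mem (mem_Ioi.mpr hs.1), norm_eq_abs]
      exact abs_laplaceRescaled_le hg_le hf_le hlam hs
    · rw [indicator_of_notMem hs, norm_zero]
      exact indicator_nonneg (fun s (hs : 0 < s) => by positivity) s
  · have h := integrableOn_rpow_mul_exp_neg_mul_rpow hp one_pos hκ
    simp only [rpow_one] at h
    exact (integrable_indicator_iff measurableSet_Ioi).mpr (h.const_mul K)
  · refine Eventually.of_forall fun s => ?_
    rcases le_or_gt s 0 with hs | hs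
    · simp [indicator_of_notMem, hs]
    · rw [indicator_of_mem (mem_Ioi.mpr hs)]
      refine (tendsto_laplaceRescaled hfp hslope hs).congr' ?_
      filter_upwards [eventually_ge_atTop (s / δ)] with lam hlam
      rw [indicator_of_mem (show s ∈ Ioc 0 (lam * δ) from ⟨hs, (div_le_iff₀ hδ).mp hlam⟩)]

theorem tendsto_rpow_mul_setIntegral_Ioc_mul_exp (hf : Measurable f) (hg : Measurable g)
    (hp : -1 < p) (hc : 0 < c) (hδ : 0 < δ) (hκ : 0 < κ)
    (hfp : Tendsto (fun t => f t / (t - a) ^ p) (𝓝[>] a) (𝓝 1))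
    (hslope : Tendsto (slope g a) (𝓝[>] a) (𝓝 (-c)))
    (hg_le : ∀ t ∈ Ioc a (a + δ), g t - g a ≤ -κ * (t - a))
    (hf_le : ∀ t ∈ Ioc a (a + δ), |f t| ≤ K * (t - a) ^ p) :
    Tendsto (fun lam => lam ^ (p + 1) * ∫ t in Ioc a (a + δ), f t * exp (lam * (g t - g a)))
      atTop (𝓝 (Gamma (p + 1) * c ^ (-(p + 1)))) := by
  rw [← integral_rpow_mul_exp_neg_mul_Ioi_eq_Gamma_mul hp hc]
  refine (tendsto_setIntegral_laplaceRescaled hf hg hp hδ hκ hfp hslope hg_le hf_le).congr' ?_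
  filter_upwards [eventually_gt_atTop 0] with lam hlam
  rw [setIntegral_Ioc_eq_inv_mul_setIntegral_comp_add_div _ a hδ.le hlam, ← mul_assoc,
    rpow_add_one hlam.ne', mul_inv_cancel_right₀ hlam.ne', ← integral_const_mul]
  rfl

theorem tendsto_rpow_mul_setIntegral_mul_exp_sub {S : Set ℝ} {ℓ η : ℝ} (hf : Measurable f)
    (hg : Measurable g) (hp : -1 < p) (hc : 0 < c) (hδ : 0 < δ) (hκ : 0 < κ)
    (hfp : Tendsto (fun t => f t / (t - a) ^ p) (𝓝[>] a) (𝓝 1))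
    (hslope : Tendsto (slope g a) (𝓝[>] a) (𝓝 (-c)))
    (hg_le : ∀ t ∈ Ioc a (a + δ), g t - g a ≤ -κ * (t - a))
    (hf_le : ∀ t ∈ Ioc a (a + δ), |f t| ≤ K * (t - a) ^ p)
    (hSm : MeasurableSet S) (hnear : S ∩ Iic (a + δ) = Icc a (a + δ))
    (hint : IntegrableOn (fun t => |f t| * exp (ℓ * g t)) S) (hη : 0 < η)
    (htail : ∀ t ∈ S, a + δ < t → g t ≤ g a - η) :
    Tendsto (fun lam => lam ^ (p + 1) * ∫ t in S, f t * exp (lam * (g t - g a)))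
      atTop (𝓝 (Gamma (p + 1) * c ^ (-(p + 1)))) := by
  have hle : ∀ t ∈ S, g t ≤ g a := by
    intro t ht
    rcases le_or_gt t (a + δ) with htδ | htδ
    · have hat : a ≤ t := (hnear.subset ⟨ht, htδ⟩).1
      rcases hat.eq_or_lt with rfl | hat
      · exact le_rfl
      · nlinarith [hg_le t ⟨hat, htδ⟩]
    · linarith [htail t ht htδ]
  have hsum := (tendsto_rpow_mul_setIntegral_Ioc_mul_exp hf hg hp hc hδ hκ hfp hslope hg_le
    hf_le).add (tendsto_rpow_mul_integral_mul_exp_of_le_sub (p + 1) (hint.mono_set sdiff_subset)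
      hη (ae_restrict_of_forall_mem (hSm.diff measurableSet_Iic)
        fun t ht => htail t ht.1 (not_le.mp ht.2)))
  rw [add_zero] at hsum
  refine hsum.congr' ?_
  filter_upwards [eventually_ge_atTop ℓ] with lam hlam
  rw [← mul_add, ← integral_inter_add_sdiff measurableSet_Iic
    (integrable_mul_exp_mul_sub hint hf.aemeasurable hg.aemeasurable
      (ae_restrict_of_forall_mem hSm hle) hlam), hnear, setIntegral_congr_set Ioc_ae_eq_Icc]

end Rescaling

lemma setOf_le_and_coe_lt_inter_Iic {a c : ℝ} {b : EReal} (hc : (c : EReal) < b) :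
    {t : ℝ | a ≤ t ∧ (t : EReal) < b} ∩ Iic c = Icc a c := by
  ext t
  refine ⟨fun ⟨⟨hat, _⟩, htc⟩ => ⟨hat, htc⟩, fun ⟨hat, htc⟩ => ⟨⟨hat, ?_⟩, htc⟩⟩
  exact lt_of_le_of_lt (EReal.coe_le_coe_iff.mpr htc) hc

theorem laplace_boundary_maximum_general (a : ℝ) (b : EReal) (hab : (a : EReal) < b)
    (S : Set ℝ) (hS : S = {t : ℝ | a ≤ t ∧ (t : EReal) < b})
    (f g : ℝ → ℝ) (hf : Measurable f) (hg : Measurable g)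
    (ℓ : ℝ)
    (hint : IntegrableOn (fun t => |f t| * Real.exp (ℓ * g t)) S)
    (g' : ℝ) (hderiv : HasDerivWithinAt g g' (Set.Ici a) a) (hg' : g' < 0)
    (hη : ∀ δ > 0, ∃ η > 0, ∀ t ∈ S, a + δ < t → g t < g a - η)
    (p : ℝ) (hp : -1 < p)
    (hfp : Tendsto (fun t => f t / (t - a) ^ p) (nhdsWithin a (Set.Ioi a)) (nhds 1)) :
    Tendsto (fun lam : ℝ =>
        (∫ t in S, f t * Real.exp (lam * g t)) /
          (Real.Gamma (p + 1) * (-g' * lam) ^ (-(p + 1)) * Real.exp (g a * lam)))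
      atTop (nhds 1) := by
  set c := -g'
  have hc : 0 < c := neg_pos.mpr hg'
  have hslope : Tendsto (slope g a) (𝓝[>] a) (𝓝 (-c)) := by
    rw [neg_neg]
    exact (hasDerivWithinAt_iff_tendsto_slope' (lt_irrefl a)).mp hderiv.Ioi_of_Ici
  obtain ⟨δ, hδ, hloc⟩ := exists_pos_forall_Ioc_add_of_eventually_nhdsGT
    ((eventually_sub_le_mul_of_tendsto_slope hslope (m := -(c / 2)) (by linarith)).and
      ((eventually_abs_le_mul_rpow_of_tendsto_div_rpow hfp one_lt_two).and
        (nhdsWithin_le_nhds ((continuous_coe_real_ereal.tendsto a).eventually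
          (eventually_lt_nhds hab)))))
  obtain ⟨η, hη0, hηg⟩ := hη δ hδ
  have hSm : MeasurableSet S :=
    hS ▸ measurableSet_Ici.inter (measurable_coe_real_ereal measurableSet_Iio)
  have hnear : S ∩ Iic (a + δ) = Icc a (a + δ) :=
    hS ▸ setOf_le_and_coe_lt_inter_Iic (hloc (a + δ) ⟨lt_add_of_pos_right a hδ, le_rfl⟩).2.2
  have hlim := tendsto_rpow_mul_setIntegral_mul_exp_sub hf hg hp hc hδ (half_pos hc) hfp hslope
    (fun t ht => (hloc t ht).1) (fun t ht => (hloc t ht).2.1) hSm hnear hint hη0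
    (fun t ht htδ => (hηg t ht htδ).le)
  exact tendsto_integral_mul_exp_div_of_tendsto_rpow_mul hp hc hlim

/-- Laplace's method for a simple maximum at the left endpoint.  Fix
`-∞ < a < b ≤ ∞`, and measurable `f g : [a,b] → ℝ` with
`∫_a^b |f t| e^{ℓ g t} dt < ∞` for some `ℓ ≥ 0`.  Suppose `g` is
differentiable (from the right) at `a` with `g'(a) < 0`; that for every
`δ > 0` there is `η > 0` with `g t < g a - η` on `(a+δ, b)`; and that
`f t ∼ (t-a)^p` as `t → a⁺` with `p > -1`.  Then
`∫_a^b f t e^{λ g t} dt ∼ Γ(p+1) (-g'(a) λ)^{-(p+1)} e^{g(a) λ}`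
as `λ → +∞`. -/
theorem laplace_boundary_maximum (a : ℝ) (b : EReal) (hab : (a : EReal) < b)
    (S : Set ℝ) (hS : S = {t : ℝ | a ≤ t ∧ (t : EReal) < b})
    (f g : ℝ → ℝ) (hf : Measurable f) (hg : Measurable g)
    (ℓ : ℝ) (hℓ : 0 ≤ ℓ)
    (hint : IntegrableOn (fun t => |f t| * Real.exp (ℓ * g t)) S)
    (g' : ℝ) (hderiv : HasDerivWithinAt g g' (Set.Ici a) a) (hg' : g' < 0)
    (hη : ∀ δ > 0, ∃ η > 0, ∀ t ∈ S, a + δ < t → g t < g a - η)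
    (p : ℝ) (hp : -1 < p)
    (hfp : Tendsto (fun t => f t / (t - a) ^ p) (nhdsWithin a (Set.Ioi a)) (nhds 1)) :
    Tendsto (fun lam : ℝ =>
        (∫ t in S, f t * Real.exp (lam * g t)) /
          (Real.Gamma (p + 1) * (-g' * lam) ^ (-(p + 1)) * Real.exp (g a * lam)))
      atTop (nhds 1) :=
  laplace_boundary_maximum_general a b hab S hS f g hf hg ℓ hint g' hderiv hg' hη p hp hfp
end

section
/- (Erdélyi-type logarithmic Watson lemma, leading term) For 0 < δ < 1, real a > 0, and real b, ∫_0^δ (-log t)^b t^{a-1} e^{-λ t} dt = λ^{-a} (log λ)^b [Γ(a) + O(1/log λ)] as λ → +∞. -/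
/-!
Write `L = log λ` and `c = -log δ > 0`. Since `∫_0^∞ t^(a-1) e^(-λt) dt = λ^(-a) Γ(a)`, the
error is `∫_0^δ ((-log t)^b - L^b) t^(a-1) e^(-λt) dt - L^b ∫_δ^∞ t^(a-1) e^(-λt) dt`.
For `0 < t ≤ δ` and `λ ≥ δ⁻¹` both `-log t` and `L` are at least `c`, and the mean value theorem
gives `|(-log t)^b - L^b| ≤ |b| c L^(b-1) (1 + |log (λt)| / c)^(|b-1|+1)`. After substituting
`s = λt`, the first integral is therefore at most `λ^(-a) L^(b-1)` times the integral of
`(1 + |log s| / c)^(|b-1|+1) s^(a-1) e^(-s)`, which converges because `|log s|` is dominated by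
small powers of `s` and `s⁻¹`. The second integral decays like `e^(-δλ)`.
-/

open MeasureTheory Real Set Filter

namespace Real

lemma rpow_le_max_inv_rpow_abs {y : ℝ} (hy : 0 < y) (p : ℝ) :
    y ^ p ≤ max y y⁻¹ ^ |p| := by
  rcases le_total 0 p with hp | hp
  · rw [abs_of_nonneg hp]
    exact rpow_le_rpow hy.le (le_max_left _ _) hp
  · rw [abs_of_nonpos hp]
    calc y ^ p = y⁻¹ ^ (-p) := by rw [inv_rpow hy.le, rpow_neg hy.le, inv_inv]
      _ ≤ max y y⁻¹ ^ (-p) := rpow_le_rpow (by positivity) (le_max_right _ _) (neg_nonneg.2 hp)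

lemma rpow_le_rpow_mul_one_add_abs_sub_div {c x L : ℝ} (hc : 0 < c) (hx : c ≤ x) (hL : c ≤ L)
    (p : ℝ) : x ^ p ≤ L ^ p * (1 + |x - L| / c) ^ |p| := by
  have hx0 : 0 < x := hc.trans_le hx
  have hL0 : 0 < L := hc.trans_le hL
  have hmax : max (x / L) (x / L)⁻¹ ≤ 1 + |x - L| / c := by
    rw [inv_div, max_le_iff]
    constructor
    · calc x / L = 1 + (x - L) / L := by field_simp; ring
        _ ≤ 1 + |x - L| / c := by
          gcongr 1 + ?_
          exact (div_le_div_of_nonneg_right (le_abs_self _) hL0.le).trans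
            (div_le_div_of_nonneg_left (abs_nonneg _) hc hL)
    · calc L / x = 1 + (L - x) / x := by field_simp; ring
        _ ≤ 1 + |x - L| / c := by
          gcongr 1 + ?_
          rw [abs_sub_comm]
          exact (div_le_div_of_nonneg_right (le_abs_self _) hx0.le).trans
            (div_le_div_of_nonneg_left (abs_nonneg _) hc hx)
  calc x ^ p = L ^ p * (x / L) ^ p := by
        rw [div_rpow hx0.le hL0.le, mul_div_cancel₀ _ (rpow_pos_of_pos hL0 p).ne']
    _ ≤ L ^ p * (1 + |x - L| / c) ^ |p| := by
        gcongr
        exact (rpow_le_max_inv_rpow_abs (div_pos hx0 hL0) p).trans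
          (rpow_le_rpow (by positivity) hmax (abs_nonneg p))

lemma abs_rpow_sub_rpow_le {c u L : ℝ} (hc : 0 < c) (hu : c ≤ u) (hL : c ≤ L) (b : ℝ) :
    |u ^ b - L ^ b| ≤ |b| * c * L ^ (b - 1) * (1 + |u - L| / c) ^ (|b - 1| + 1) := by
  have hL0 : 0 < L := hc.trans_le hL
  set r := |u - L|
  have hderiv :
      ∀ x ∈ uIcc L u, HasDerivWithinAt (fun x => x ^ b) (b * x ^ (b - 1)) (uIcc L u) x :=
    fun x hx => (hasDerivAt_rpow_const (Or.inl (hc.trans_le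
      ((le_min hL hu).trans hx.1)).ne')).hasDerivWithinAt
  have hbound : ∀ x ∈ uIcc L u,
      ‖b * x ^ (b - 1)‖ ≤ |b| * (L ^ (b - 1) * (1 + r / c) ^ |b - 1|) := by
    intro x hx
    have hcx : c ≤ x := (le_min hL hu).trans hx.1
    rw [norm_mul, norm_eq_abs, norm_eq_abs, abs_of_pos (rpow_pos_of_pos (hc.trans_le hcx) _)]
    gcongr
    have hxL : |x - L| ≤ r := abs_sub_left_of_mem_uIcc hx
    refine (rpow_le_rpow_mul_one_add_abs_sub_div hc hcx hL _).trans ?_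
    gcongr
  have hmvt := Convex.norm_image_sub_le_of_norm_hasDerivWithin_le hderiv hbound (convex_uIcc L u)
    left_mem_uIcc right_mem_uIcc
  rw [norm_eq_abs, norm_eq_abs] at hmvt
  have hr : r ≤ c * (1 + r / c) := by rw [mul_add, mul_div_cancel₀ _ hc.ne']; linarith
  calc |u ^ b - L ^ b| ≤ |b| * (L ^ (b - 1) * (1 + r / c) ^ |b - 1|) * r := hmvt
    _ ≤ |b| * (L ^ (b - 1) * (1 + r / c) ^ |b - 1|) * (c * (1 + r / c)) := by gcongr
    _ = |b| * c * L ^ (b - 1) * (1 + r / c) ^ (|b - 1| + 1) := by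
        rw [rpow_add_one (by positivity)]; ring

lemma abs_log_le_max_inv_rpow_div {s η : ℝ} (hs : 0 < s) (hη : 0 < η) :
    |log s| ≤ max s s⁻¹ ^ η / η := by
  rw [abs_le']
  constructor
  · calc log s ≤ s ^ η / η := log_le_rpow_div hs.le hη
      _ ≤ max s s⁻¹ ^ η / η := by gcongr; exact le_max_left _ _
  · calc -log s = log s⁻¹ := (log_inv s).symm
      _ ≤ s⁻¹ ^ η / η := log_le_rpow_div (inv_nonneg.2 hs.le) hη
      _ ≤ max s s⁻¹ ^ η / η := by gcongr; exact le_max_right _ _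

lemma one_add_abs_log_div_le {c η s : ℝ} (hc : 0 < c) (hη : 0 < η) (hs : 0 < s) :
    1 + |log s| / c ≤ (1 + (c * η)⁻¹) * max s s⁻¹ ^ η := by
  have hone : 1 ≤ max s s⁻¹ ^ η := by
    refine one_le_rpow ?_ hη.le
    rcases le_total 1 s with h | h
    · exact le_max_of_le_left h
    · exact le_max_of_le_right (one_le_inv₀ hs |>.2 h)
  calc 1 + |log s| / c ≤ max s s⁻¹ ^ η + max s s⁻¹ ^ η / η / c := by
        gcongr
        exact abs_log_le_max_inv_rpow_div hs hη
    _ = (1 + (c * η)⁻¹) * max s s⁻¹ ^ η := by field_simp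

lemma max_inv_rpow_le_rpow_add_rpow_neg {s r : ℝ} (hs : 0 < s) (hr : 0 ≤ r) :
    max s s⁻¹ ^ r ≤ s ^ r + s ^ (-r) := by
  rw [rpow_max hs.le (inv_nonneg.2 hs.le) hr, inv_rpow hs.le, ← rpow_neg hs.le]
  exact max_le_add_of_nonneg (by positivity) (by positivity)

lemma integrableOn_one_add_abs_log_div_rpow_mul_rpow_mul_exp_neg {a c q : ℝ} (ha : 0 < a)
    (hc : 0 < c) (hq : 0 ≤ q) :
    IntegrableOn (fun s => (1 + |log s| / c) ^ q * s ^ (a - 1) * exp (-s)) (Ioi 0) := by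
  set η := a / (2 * (q + 1))
  have hη : 0 < η := by positivity
  set r := η * q
  have hr0 : 0 ≤ r := by positivity
  have hra : r < a := by
    have : q / (q + 1) < 2 := (div_lt_iff₀ (by positivity)).2 (by linarith)
    calc r = a / 2 * (q / (q + 1)) := by simp only [r, η]; field_simp
      _ < a / 2 * 2 := by gcongr
      _ = a := by ring
  set K := (1 + (c * η)⁻¹) ^ q
  have hdom : IntegrableOn
      (fun s => K * (exp (-s) * s ^ ((a + r) - 1) + exp (-s) * s ^ ((a - r) - 1))) (Ioi 0) :=
    ((GammaIntegral_convergent (by linarith)).add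
      (GammaIntegral_convergent (by linarith))).const_mul K
  refine hdom.mono' (Measurable.aestronglyMeasurable (by fun_prop)) ?_
  refine ae_restrict_of_forall_mem measurableSet_Ioi fun s (hs : 0 < s) => ?_
  have hlog : (1 + |log s| / c) ^ q ≤ K * (s ^ r + s ^ (-r)) := by
    calc (1 + |log s| / c) ^ q ≤ ((1 + (c * η)⁻¹) * max s s⁻¹ ^ η) ^ q :=
          rpow_le_rpow (by positivity) (one_add_abs_log_div_le hc hη hs) hq
      _ = K * max s s⁻¹ ^ r := by
          rw [mul_rpow (by positivity) (by positivity), ← rpow_mul (by positivity)]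
      _ ≤ K * (s ^ r + s ^ (-r)) := by
          gcongr
          exact max_inv_rpow_le_rpow_add_rpow_neg hs hr0
  rw [norm_of_nonneg (by positivity)]
  calc (1 + |log s| / c) ^ q * s ^ (a - 1) * exp (-s)
      ≤ K * (s ^ r + s ^ (-r)) * s ^ (a - 1) * exp (-s) := by gcongr
    _ = K * (exp (-s) * s ^ ((a + r) - 1) + exp (-s) * s ^ ((a - r) - 1)) := by
        rw [show a + r - 1 = r + (a - 1) by ring, show a - r - 1 = -r + (a - 1) by ring,
          rpow_add hs, rpow_add hs]
        ring

lemma comp_mul_rpow_mul_exp_neg_eqOn (g : ℝ → ℝ) (a : ℝ) {lam : ℝ} (hlam : 0 < lam) :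
    EqOn (fun t => g (lam * t) * t ^ (a - 1) * exp (-(lam * t)))
      (fun t => lam ^ (1 - a) * (g (lam * t) * (lam * t) ^ (a - 1) * exp (-(lam * t))))
      (Ioi 0) := by
  intro t (ht : 0 < t)
  simp only
  rw [mul_rpow hlam.le ht.le, show 1 - a = -(a - 1) by ring, rpow_neg hlam.le]
  field_simp

lemma integrableOn_comp_mul_rpow_mul_exp_neg {g : ℝ → ℝ} {a lam : ℝ} (hlam : 0 < lam)
    (hg : IntegrableOn (fun s => g s * s ^ (a - 1) * exp (-s)) (Ioi 0)) :
    IntegrableOn (fun t => g (lam * t) * t ^ (a - 1) * exp (-(lam * t))) (Ioi 0) := by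
  have hcomp := (integrableOn_Ioi_comp_mul_left_iff
    (fun s => g s * s ^ (a - 1) * exp (-s)) 0 hlam).2 (by rwa [mul_zero])
  exact IntegrableOn.congr_fun (hcomp.const_mul _) (comp_mul_rpow_mul_exp_neg_eqOn g a hlam).symm
    measurableSet_Ioi

lemma integral_comp_mul_rpow_mul_exp_neg (g : ℝ → ℝ) (a : ℝ) {lam : ℝ} (hlam : 0 < lam) :
    ∫ t in Ioi 0, g (lam * t) * t ^ (a - 1) * exp (-(lam * t)) =
      lam ^ (-a) * ∫ s in Ioi 0, g s * s ^ (a - 1) * exp (-s) := by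
  rw [setIntegral_congr_fun measurableSet_Ioi (comp_mul_rpow_mul_exp_neg_eqOn g a hlam),
    integral_const_mul, integral_comp_mul_left_Ioi (fun s => g s * s ^ (a - 1) * exp (-s)) 0 hlam,
    mul_zero, smul_eq_mul, ← mul_assoc, ← rpow_neg_one, ← rpow_add hlam]
  ring_nf

lemma integrableOn_rpow_mul_exp_neg_mul {a lam : ℝ} (ha : 0 < a) (hlam : 0 < lam) :
    IntegrableOn (fun t => t ^ (a - 1) * exp (-(lam * t))) (Ioi 0) := by
  simpa using integrableOn_comp_mul_rpow_mul_exp_neg (g := fun _ => 1) hlam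
    (by simpa [mul_comm] using GammaIntegral_convergent ha)

lemma setIntegral_Ioi_rpow_mul_exp_neg_mul_le {a δ lam : ℝ} (ha : 0 < a) (hδ : 0 < δ)
    (hlam : 1 ≤ lam) :
    ∫ t in Ioi δ, t ^ (a - 1) * exp (-(lam * t)) ≤ exp (-((lam - 1) * δ)) * Gamma a := by
  have hGamma := GammaIntegral_convergent ha
  have hsub : Ioi δ ⊆ Ioi 0 := Ioi_subset_Ioi hδ.le
  calc ∫ t in Ioi δ, t ^ (a - 1) * exp (-(lam * t))
      ≤ ∫ t in Ioi δ, exp (-((lam - 1) * δ)) * (exp (-t) * t ^ (a - 1)) := by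
        refine setIntegral_mono_on ((integrableOn_rpow_mul_exp_neg_mul ha (by linarith)).mono_set
          hsub) ((hGamma.mono_set hsub).const_mul _) measurableSet_Ioi fun t (ht : δ < t) => ?_
        have hexp : exp (-(lam * t)) ≤ exp (-((lam - 1) * δ)) * exp (-t) := by
          rw [← exp_add, exp_le_exp]
          nlinarith
        calc t ^ (a - 1) * exp (-(lam * t))
            ≤ t ^ (a - 1) * (exp (-((lam - 1) * δ)) * exp (-t)) := by
              have : 0 < t := hδ.trans ht
              gcongr
          _ = exp (-((lam - 1) * δ)) * (exp (-t) * t ^ (a - 1)) := by ring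
    _ ≤ exp (-((lam - 1) * δ)) * Gamma a := by
        rw [integral_const_mul, Gamma_eq_integral ha]
        gcongr
        exact ae_restrict_of_forall_mem measurableSet_Ioi fun t (ht : 0 < t) => by positivity

lemma abs_setIntegral_neg_log_rpow_sub_le {a δ lam : ℝ} (ha : 0 < a) (hδ0 : 0 < δ)
    (hδ1 : δ < 1) (hlam : δ⁻¹ ≤ lam) (b : ℝ) :
    |(∫ t in Ioc 0 δ, (-log t) ^ b * t ^ (a - 1) * exp (-(lam * t))) -
        log lam ^ b * ∫ t in Ioc 0 δ, t ^ (a - 1) * exp (-(lam * t))| ≤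
      |b| * -log δ * log lam ^ (b - 1) * (lam ^ (-a) *
        ∫ s in Ioi 0, (1 + |log s| / -log δ) ^ (|b - 1| + 1) * s ^ (a - 1) * exp (-s)) := by
  set c := -log δ
  set L := log lam
  set G : ℝ → ℝ := fun s => (1 + |log s| / c) ^ (|b - 1| + 1)
  have hc : 0 < c := neg_pos.2 (log_neg hδ0 hδ1)
  have hlam0 : 0 < lam := (inv_pos.2 hδ0).trans_le hlam
  have hcL : c ≤ L := (log_inv δ).symm.trans_le (log_le_log (inv_pos.2 hδ0) hlam)
  have hw : IntegrableOn (fun t => t ^ (a - 1) * exp (-(lam * t))) (Ioc 0 δ) :=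
    (integrableOn_rpow_mul_exp_neg_mul ha hlam0).mono_set Ioc_subset_Ioi_self
  have hdom : IntegrableOn (fun t => |b| * c * L ^ (b - 1) *
      (G (lam * t) * t ^ (a - 1) * exp (-(lam * t)))) (Ioi 0) :=
    (integrableOn_comp_mul_rpow_mul_exp_neg hlam0
      (integrableOn_one_add_abs_log_div_rpow_mul_rpow_mul_exp_neg ha hc
        (by positivity))).const_mul _
  have hpt : ∀ t ∈ Ioc 0 δ, ‖(-log t) ^ b * t ^ (a - 1) * exp (-(lam * t)) -
      L ^ b * (t ^ (a - 1) * exp (-(lam * t)))‖ ≤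
      |b| * c * L ^ (b - 1) * (G (lam * t) * t ^ (a - 1) * exp (-(lam * t))) := by
    rintro t ⟨ht0, htδ⟩
    have hct : c ≤ -log t := neg_le_neg (log_le_log ht0 htδ)
    have hsub : |-log t - L| = |log (lam * t)| := by
      rw [abs_sub_comm, log_mul hlam0.ne' ht0.ne', sub_neg_eq_add]
    have key := abs_rpow_sub_rpow_le hc hct hcL b
    rw [hsub] at key
    have hw0 : 0 ≤ t ^ (a - 1) * exp (-(lam * t)) := by positivity
    rw [norm_eq_abs, mul_assoc, ← sub_mul, abs_mul, abs_of_nonneg hw0]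
    calc |(-log t) ^ b - L ^ b| * (t ^ (a - 1) * exp (-(lam * t)))
        ≤ |b| * c * L ^ (b - 1) * G (lam * t) * (t ^ (a - 1) * exp (-(lam * t))) := by gcongr
      _ = |b| * c * L ^ (b - 1) * (G (lam * t) * t ^ (a - 1) * exp (-(lam * t))) := by ring
  have hdiff : IntegrableOn (fun t => (-log t) ^ b * t ^ (a - 1) * exp (-(lam * t)) -
      L ^ b * (t ^ (a - 1) * exp (-(lam * t)))) (Ioc 0 δ) :=
    (hdom.mono_set Ioc_subset_Ioi_self).mono' (Measurable.aestronglyMeasurable (by fun_prop))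
      (ae_restrict_of_forall_mem measurableSet_Ioc hpt)
  have hf : IntegrableOn (fun t => (-log t) ^ b * t ^ (a - 1) * exp (-(lam * t))) (Ioc 0 δ) :=
    IntegrableOn.congr_fun (hdiff.add (hw.const_mul (L ^ b)))
      (fun t _ => by simp only [Pi.add_apply]; ring) measurableSet_Ioc
  rw [← integral_const_mul, ← integral_sub hf (hw.const_mul _), ← norm_eq_abs]
  calc _ ≤ ∫ t in Ioc 0 δ, |b| * c * L ^ (b - 1) *
        (G (lam * t) * t ^ (a - 1) * exp (-(lam * t))) :=
        norm_integral_le_of_norm_le (hdom.mono_set Ioc_subset_Ioi_self)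
          (ae_restrict_of_forall_mem measurableSet_Ioc hpt)
    _ ≤ ∫ t in Ioi 0, |b| * c * L ^ (b - 1) *
        (G (lam * t) * t ^ (a - 1) * exp (-(lam * t))) :=
        setIntegral_mono_set hdom
          (ae_restrict_of_forall_mem measurableSet_Ioi fun t (ht : 0 < t) => by
            have hL : 0 ≤ L := hc.le.trans hcL
            simp only [G]; positivity)
          Ioc_subset_Ioi_self.eventuallyLE
    _ = _ := by rw [integral_const_mul, integral_comp_mul_rpow_mul_exp_neg G a hlam0]

lemma setIntegral_Ioc_rpow_mul_exp_neg_mul {a δ lam : ℝ} (ha : 0 < a) (hδ : 0 < δ)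
    (hlam : 0 < lam) :
    ∫ t in Ioc 0 δ, t ^ (a - 1) * exp (-(lam * t)) =
      lam ^ (-a) * Gamma a - ∫ t in Ioi δ, t ^ (a - 1) * exp (-(lam * t)) := by
  have hw := integrableOn_rpow_mul_exp_neg_mul ha hlam
  rw [eq_sub_iff_add_eq, ← setIntegral_union Ioc_disjoint_Ioi_same measurableSet_Ioi
    (hw.mono_set Ioc_subset_Ioi_self) (hw.mono_set (Ioi_subset_Ioi hδ.le)),
    Ioc_union_Ioi_eq_Ioi hδ.le, integral_rpow_mul_exp_neg_mul_Ioi ha hlam, one_div,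
    inv_rpow hlam.le, rpow_neg hlam.le]

lemma eventually_log_rpow_mul_setIntegral_Ioi_le {a δ : ℝ} (ha : 0 < a) (hδ : 0 < δ)
    (b : ℝ) :
    ∀ᶠ lam in atTop, log lam ^ b * ∫ t in Ioi δ, t ^ (a - 1) * exp (-(lam * t)) ≤
      lam ^ (-a) * log lam ^ (b - 1) := by
  have hlim : Tendsto (fun lam => exp δ * Gamma a * (lam ^ (a + 1) * exp (-δ * lam))) atTop
      (nhds 0) := by
    simpa using (tendsto_rpow_mul_exp_neg_mul_atTop_nhds_zero (a + 1) δ hδ).const_mul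
      (exp δ * Gamma a)
  filter_upwards [hlim.eventually_le_const one_pos, eventually_gt_atTop 1] with lam hsmall hlam
  have hlam0 : 0 < lam := one_pos.trans hlam
  have hL : 0 < log lam := log_pos hlam
  calc log lam ^ b * ∫ t in Ioi δ, t ^ (a - 1) * exp (-(lam * t))
      ≤ log lam ^ b * (exp (-((lam - 1) * δ)) * Gamma a) := by
        gcongr
        exact setIntegral_Ioi_rpow_mul_exp_neg_mul_le ha hδ hlam.le
    _ = lam ^ (-a) * log lam ^ (b - 1) *
          (exp δ * Gamma a * (lam ^ a * log lam * exp (-δ * lam))) := by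
        rw [rpow_neg hlam0.le, rpow_sub_one hL.ne', show -((lam - 1) * δ) = δ + -δ * lam by ring,
          exp_add]
        field_simp
    _ ≤ lam ^ (-a) * log lam ^ (b - 1) *
          (exp δ * Gamma a * (lam ^ (a + 1) * exp (-δ * lam))) := by
        rw [rpow_add_one hlam0.ne']
        gcongr
        exact log_le_self hlam0.le
    _ ≤ lam ^ (-a) * log lam ^ (b - 1) := mul_le_of_le_one_right (by positivity) hsmall

end Real

/-- Erdélyi-type logarithmic Watson lemma, leading term: for `0 < δ < 1`,
`a > 0` and real `b`,
`∫_0^δ (-log t)^b t^{a-1} e^{-λ t} dt = λ^{-a} (log λ)^b [Γ(a) + O(1/log λ)]`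
as `λ → +∞`. -/
theorem log_watson_leading_term (δ : ℝ) (hδ0 : 0 < δ) (hδ1 : δ < 1)
    (a : ℝ) (ha : 0 < a) (b : ℝ) :
    ∃ C Λ : ℝ, 0 < Λ ∧ ∀ lam : ℝ, Λ ≤ lam →
      |(∫ t in Set.Ioc (0 : ℝ) δ,
            (-Real.log t) ^ b * t ^ (a - 1) * Real.exp (-(lam * t))) -
          lam ^ (-a) * Real.log lam ^ b * Real.Gamma a| ≤
        lam ^ (-a) * Real.log lam ^ b * (C / Real.log lam) := by
  obtain ⟨Λ, htail⟩ :=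
    eventually_atTop.1 (eventually_log_rpow_mul_setIntegral_Ioi_le ha hδ0 b)
  refine ⟨|b| * -log δ * (∫ s in Ioi 0, (1 + |log s| / -log δ) ^ (|b - 1| + 1) * s ^ (a - 1) *
    exp (-s)) + 1, max Λ δ⁻¹, lt_max_of_lt_right (inv_pos.2 hδ0), fun lam hlam => ?_⟩
  have hlamδ : δ⁻¹ ≤ lam := le_of_max_le_right hlam
  have hlam0 : 0 < lam := (inv_pos.2 hδ0).trans_le hlamδ
  have hL : 0 < log lam := log_pos (((one_lt_inv₀ hδ0).2 hδ1).trans_le hlamδ)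
  have hmain := abs_setIntegral_neg_log_rpow_sub_le ha hδ0 hδ1 hlamδ b
  rw [setIntegral_Ioc_rpow_mul_exp_neg_mul ha hδ0 hlam0] at hmain
  set T := ∫ t in Ioi δ, t ^ (a - 1) * exp (-(lam * t))
  have hT : 0 ≤ T := setIntegral_nonneg measurableSet_Ioi fun t ht =>
    mul_nonneg (rpow_nonneg (hδ0.trans ht).le _) (exp_pos _).le
  calc _ = |((∫ t in Ioc 0 δ, (-log t) ^ b * t ^ (a - 1) * exp (-(lam * t))) -
          log lam ^ b * (lam ^ (-a) * Gamma a - T)) - log lam ^ b * T| := by congr 1; ring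
    _ ≤ _ + log lam ^ b * T :=
        (abs_sub _ _).trans_eq (by rw [abs_of_nonneg (mul_nonneg (rpow_nonneg hL.le b) hT)])
    _ ≤ _ + lam ^ (-a) * log lam ^ (b - 1) :=
        add_le_add hmain (htail lam (le_of_max_le_left hlam))
    _ = _ := by rw [rpow_sub_one hL.ne']; field_simp
end
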